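/- arXiv:2401.08792 — 2 statements merged into one kernel-verified Lean document; each statement's English description precedes it below -/
import Mathlib

section
/- The natural embedding T : L^∞[0,1] → L^p[0,1] (1 ≤ p < ∞) is d-compact, i.e., T maps every disjoint bounded subset of L^∞[0,1] to a relatively compact subset of L^p[0,1], but T is not a compact operator. -/
open Filter Topology Bornology MeasureTheory ENNReal

noncomputable section

/-- A set in a Banach lattice is disjoint if its elements are pairwise disjoint. -/
def DisjointSet {E : Type*} [Lattice E] [AddCommGroup E] (D : Set E) : Prop :=
  ∀ x ∈ D, ∀ y ∈ D, x ≠ y → |x| ⊓ |y| = 0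

section Aux

open Real intervalIntegral

lemma aux_int_cos_ne (c : ℝ) (hc : c ≠ 0) :
    ∫ x in (0:ℝ)..1, Real.cos (c*x) = Real.sin c / c := by
  rw [intervalIntegral.integral_comp_mul_left (fun x => Real.cos x) hc]
  simp [integral_cos, div_eq_inv_mul]

lemma aux_int_cos_intmul (k : ℤ) (hk : k ≠ 0) :
    ∫ x in (0:ℝ)..1, Real.cos ((2*k*π)*x) = 0 := by
  have h : (2*k*π : ℝ) ≠ 0 := by
    have : (k:ℝ) ≠ 0 := Int.cast_ne_zero.mpr hk
    positivity
  rw [aux_int_cos_ne _ h]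
  have : (2*(k:ℝ)*π) = ((2*k : ℤ) : ℝ) * π := by push_cast; ring
  rw [this, Real.sin_int_mul_pi, zero_div]

lemma aux_int_cos_sq (k : ℤ) (hk : k ≠ 0) :
    ∫ x in (0:ℝ)..1, Real.cos ((2*k*π)*x)^2 = 1/2 := by
  have h : ∀ x : ℝ, Real.cos ((2*k*π)*x)^2 = 1/2 + Real.cos ((2*(2*k)*π)*x)/2 := by
    intro x; rw [Real.cos_sq]; ring_nf
  simp_rw [h]
  rw [intervalIntegral.integral_add intervalIntegrable_const
    (Continuous.intervalIntegrable (by fun_prop) 0 1)]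
  have : ∫ x in (0:ℝ)..1, Real.cos ((2*(2*k)*π)*x)/2
      = (∫ x in (0:ℝ)..1, Real.cos ((2*(2*k:ℤ)*π)*x))/2 := by
    rw [intervalIntegral.integral_div]; push_cast; ring_nf
  rw [this, aux_int_cos_intmul (2*k) (by omega)]
  simp

lemma aux_cos_mul_cos (A B : ℝ) :
    Real.cos A * Real.cos B = (Real.cos (A-B) + Real.cos (A+B))/2 := by
  rw [Real.cos_sub, Real.cos_add]; ring

lemma aux_int_cos_cross (n m : ℤ) (hnm : n ≠ m) (hnm' : n ≠ -m) :
    ∫ x in (0:ℝ)..1, Real.cos ((2*n*π)*x) * Real.cos ((2*m*π)*x) = 0 := by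
  have h : ∀ x : ℝ, Real.cos ((2*n*π)*x) * Real.cos ((2*m*π)*x)
      = Real.cos ((2*(n-m)*π)*x)/2 + Real.cos ((2*(n+m)*π)*x)/2 := by
    intro x; rw [aux_cos_mul_cos]; push_cast; ring_nf
  simp_rw [h]
  rw [intervalIntegral.integral_add
    (Continuous.intervalIntegrable (by fun_prop) 0 1)
    (Continuous.intervalIntegrable (by fun_prop) 0 1),
    intervalIntegral.integral_div, intervalIntegral.integral_div]
  have h1 : ((2*(n-m:ℤ)*π : ℝ)) = (2*((n:ℝ)-m)*π) := by push_cast; ring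
  have h2 : ((2*(n+m:ℤ)*π : ℝ)) = (2*((n:ℝ)+m)*π) := by push_cast; ring
  rw [← h1, ← h2, aux_int_cos_intmul (n-m) (by omega), aux_int_cos_intmul (n+m) (by omega)]
  simp

lemma aux_int_sq_diff (n m : ℤ) (hn : n ≠ 0) (hm : m ≠ 0) (hnm : n ≠ m) (hnm' : n ≠ -m) :
    ∫ x in (0:ℝ)..1, (Real.cos ((2*n*π)*x) - Real.cos ((2*m*π)*x))^2 = 1 := by
  have h : ∀ x : ℝ, (Real.cos ((2*n*π)*x) - Real.cos ((2*m*π)*x))^2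
      = Real.cos ((2*n*π)*x)^2 + Real.cos ((2*m*π)*x)^2
        - 2*(Real.cos ((2*n*π)*x) * Real.cos ((2*m*π)*x)) := by intro x; ring
  simp_rw [h]
  rw [intervalIntegral.integral_sub
      (IntervalIntegrable.add (Continuous.intervalIntegrable (by fun_prop) 0 1)
        (Continuous.intervalIntegrable (by fun_prop) 0 1))
      (Continuous.intervalIntegrable (by fun_prop) 0 1),
    intervalIntegral.integral_add (Continuous.intervalIntegrable (by fun_prop) 0 1)
      (Continuous.intervalIntegrable (by fun_prop) 0 1),
    intervalIntegral.integral_const_mul, aux_int_cos_sq n hn, aux_int_cos_sq m hm,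
    aux_int_cos_cross n m hnm hnm']
  ring

lemma aux_l1_lower (h : ℝ → ℝ) (hc : Continuous h) (hb : ∀ x, |h x| ≤ 2)
    (hint : ∫ x in (0:ℝ)..1, (h x)^2 = 1) :
    1/2 ≤ ∫ x, |h x| ∂(volume.restrict (Set.Icc (0:ℝ) 1)) := by
  have hIoc : (volume.restrict (Set.Icc (0:ℝ) 1)) = volume.restrict (Set.Ioc (0:ℝ) 1) :=
    Measure.restrict_congr_set Ioc_ae_eq_Icc.symm
  have hI1 : ∫ x, (h x)^2 ∂(volume.restrict (Set.Icc (0:ℝ) 1)) = 1 := by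
    rw [hIoc, ← intervalIntegral.integral_of_le zero_le_one, hint]
  have hint1 : Integrable (fun x => |h x|) (volume.restrict (Set.Icc (0:ℝ) 1)) :=
    hc.abs.integrableOn_Icc
  have hint2 : Integrable (fun x => (h x)^2) (volume.restrict (Set.Icc (0:ℝ) 1)) :=
    (hc.pow 2).integrableOn_Icc
  have hmono : ∫ x, (h x)^2 ∂(volume.restrict (Set.Icc (0:ℝ) 1))
      ≤ ∫ x, 2 * |h x| ∂(volume.restrict (Set.Icc (0:ℝ) 1)) := by
    refine integral_mono hint2 (hint1.const_mul 2) ?_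
    intro x
    simp only []
    have : (h x)^2 = |h x| * |h x| := by rw [← abs_mul, abs_of_nonneg (mul_self_nonneg _), sq]
    rw [this]
    exact mul_le_mul_of_nonneg_right (hb x) (abs_nonneg _)
  rw [hI1] at hmono
  rw [MeasureTheory.integral_const_mul] at hmono
  linarith

end Aux

set_option synthInstance.maxHeartbeats 1000000 in
/-- The natural embedding `T : L^∞[0,1] → L^p[0,1]` (`1 ≤ p < ∞`) is d-compact
(it maps every disjoint bounded set onto a relatively compact set),
but it is not a compact operator. -/
theorem natural_embedding_dCompact_not_compact
    (p : ℝ≥0∞) [Fact (1 ≤ p)] (hp : p ≠ ∞)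
    (μ : Measure ℝ) (hμ : μ = volume.restrict (Set.Icc (0 : ℝ) 1))
    (T : Lp ℝ ∞ μ →L[ℝ] Lp ℝ p μ)
    (hT : ∀ f : Lp ℝ ∞ μ, (T f : ℝ → ℝ) =ᵐ[μ] (f : ℝ → ℝ)) :
    (∀ D : Set (Lp ℝ ∞ μ), DisjointSet D → IsBounded D →
      IsCompact (closure (T '' D))) ∧ ¬ IsCompactOperator T := by
  have hProb : IsProbabilityMeasure μ := by
    constructor
    rw [hμ, Measure.restrict_apply_univ, Real.volume_Icc]
    norm_num
  have hp1 : (1:ℝ≥0∞) ≤ p := Fact.out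
  have hpt : 1 ≤ p.toReal := by
    rw [← ENNReal.toReal_one]
    exact ENNReal.toReal_mono hp hp1
  have hpt0 : p.toReal ≠ 0 := by positivity
  -- a.e. bound for L∞ functions
  have hae_bound : ∀ (f : Lp ℝ ∞ μ) (K : ℝ), ‖f‖ ≤ K → ∀ᵐ x ∂μ, ‖f x‖ ≤ K := by
    intro f K hK
    have hKnn : 0 ≤ K := le_trans (norm_nonneg f) hK
    have h1 : ∀ᵐ x ∂μ, (‖f x‖₊ : ℝ≥0∞) ≤ eLpNormEssSup (⇑f) μ := ae_le_eLpNormEssSup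
    have h2 : eLpNorm (⇑f) ∞ μ ≤ ENNReal.ofReal K := by
      rw [ENNReal.le_ofReal_iff_toReal_le (Lp.eLpNorm_ne_top f) hKnn]
      rw [← Lp.norm_def]; exact hK
    rw [eLpNorm_exponent_top] at h2
    filter_upwards [h1] with x hx
    have := le_trans hx h2
    rwa [← enorm_eq_nnnorm, ← ofReal_norm, ENNReal.ofReal_le_ofReal_iff hKnn] at this
  constructor
  · -- d-compactness
    intro D hD hBdd
    refine TotallyBounded.isCompact_of_isClosed (TotallyBounded.closure ?_) isClosed_closure
    rw [Metric.totallyBounded_iff]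
    intro ε hε
    obtain ⟨M, hM⟩ := isBounded_iff_forall_norm_le.mp hBdd
    set K : ℝ := max M 0 with hKdef
    have hK0 : 0 ≤ K := le_max_right _ _
    have hMK : ∀ f ∈ D, ‖f‖ ≤ K := fun f hf => le_trans (hM f hf) (le_max_left _ _)
    -- measurable representatives and supports
    set g : Lp ℝ ∞ μ → ℝ → ℝ := fun f => (Lp.aestronglyMeasurable f).mk f with hgdef
    have hg : ∀ f : Lp ℝ ∞ μ, ⇑f =ᵐ[μ] g f := fun f => (Lp.aestronglyMeasurable f).ae_eq_mk
    have hgm : ∀ f : Lp ℝ ∞ μ, StronglyMeasurable (g f) :=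
      fun f => (Lp.aestronglyMeasurable f).stronglyMeasurable_mk
    set A : Lp ℝ ∞ μ → Set ℝ := fun f => {x | g f x ≠ 0} with hAdef
    have hA : ∀ f, MeasurableSet (A f) := fun f =>
      ((hgm f).measurable (measurableSet_singleton 0).compl)
    -- key norm estimate
    have hbound : ∀ f ∈ D, eLpNorm (⇑f) p μ ≤ μ (A f) ^ p.toReal⁻¹ * ENNReal.ofReal K := by
      intro f hf
      have h1 : eLpNorm (⇑f) p μ = eLpNorm (g f) p μ := eLpNorm_congr_ae (hg f)
      have h2 : (A f).indicator (g f) = g f := Set.indicator_eq_self.mpr (by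
        intro x hx; exact hx)
      have h3 : eLpNorm (g f) p μ = eLpNorm (g f) p (μ.restrict (A f)) := by
        rw [← eLpNorm_indicator_eq_eLpNorm_restrict (hA f), h2]
      have h4 : ∀ᵐ x ∂(μ.restrict (A f)), ‖g f x‖ ≤ K := by
        refine ae_restrict_of_ae ?_
        filter_upwards [hae_bound f K (hMK f hf), hg f] with x hx heq
        rwa [← heq]
      calc eLpNorm (⇑f) p μ = eLpNorm (g f) p (μ.restrict (A f)) := by rw [h1, h3]
        _ ≤ (μ.restrict (A f)) Set.univ ^ p.toReal⁻¹ * ENNReal.ofReal K :=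
            eLpNorm_le_of_ae_bound h4
        _ = μ (A f) ^ p.toReal⁻¹ * ENNReal.ofReal K := by rw [Measure.restrict_apply_univ]
    -- a.e. disjointness of supports
    have hdisj : ∀ f ∈ D, ∀ h ∈ D, f ≠ h → μ (A f ∩ A h) = 0 := by
      intro f hf h hh hne
      have hlat : |f| ⊓ |h| = 0 := hD f hf h hh hne
      have hae : ∀ᵐ x ∂μ, min (g f x) (g h x) = 0 ∨ (g f x = 0 ∨ g h x = 0) := by
        have hc1 : ⇑(|f| ⊓ |h|) =ᵐ[μ] fun x => min |f x| |h x| := by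
          filter_upwards [Lp.coeFn_inf |f| |h|, Lp.coeFn_abs f, Lp.coeFn_abs h] with x h1 h2 h3
          simp only [h1, Pi.inf_apply, h2, h3]
        have hc0 : ⇑(|f| ⊓ |h|) =ᵐ[μ] (0 : ℝ → ℝ) := by rw [hlat]; exact Lp.coeFn_zero ℝ ∞ μ
        filter_upwards [hc1, hc0, hg f, hg h] with x h1 h2 h3 h4
        right
        have : min |f x| |h x| = 0 := by rw [← h1, h2]; rfl
        rcases min_eq_iff.mp this with ⟨ha, _⟩ | ⟨ha, _⟩
        · left; rw [← h3]; exact abs_eq_zero.mp ha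
        · right; rw [← h4]; exact abs_eq_zero.mp ha
      have hsub : A f ∩ A h ⊆ {x | ¬ (min (g f x) (g h x) = 0 ∨ (g f x = 0 ∨ g h x = 0))} := by
        intro x ⟨hx1, hx2⟩
        simp only [Set.mem_setOf_eq, not_or]
        refine ⟨?_, hx1, hx2⟩
        intro hmin
        rcases min_eq_iff.mp hmin with ⟨ha, _⟩ | ⟨ha, _⟩
        · exact hx1 ha
        · exact hx2 ha
      exact measure_mono_null hsub (ae_iff.mp hae)
    -- the set of elements with large support is finite
    set δ : ℝ := (ε/2/(K+1))^p.toReal with hδdef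
    have hδ0 : 0 < δ := by
      apply Real.rpow_pos_of_pos
      positivity
    set S : Set (Lp ℝ ∞ μ) := {f ∈ D | ENNReal.ofReal δ < μ (A f)} with hSdef
    have hSfin : S.Finite := by
      by_contra hinf
      obtain ⟨N, hN⟩ := exists_nat_gt (δ⁻¹)
      obtain ⟨t, hts, hcard⟩ := Set.Infinite.exists_subset_card_eq hinf N
      have hsum : μ (⋃ f ∈ t, A f) = ∑ f ∈ t, μ (A f) := by
        refine measure_biUnion_finset₀ ?_ (fun f _ => (hA f).nullMeasurableSet)
        intro f hf h hh hne
        exact hdisj f (hts hf).1 h (hts hh).1 hne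
      have hle : (N : ℝ≥0∞) * ENNReal.ofReal δ ≤ μ (⋃ f ∈ t, A f) := by
        rw [hsum]
        calc (N : ℝ≥0∞) * ENNReal.ofReal δ = ∑ _f ∈ t, ENNReal.ofReal δ := by
              rw [Finset.sum_const, hcard, nsmul_eq_mul]
          _ ≤ ∑ f ∈ t, μ (A f) := Finset.sum_le_sum (fun f hf => (hts hf).2.le)
      have hone : μ (⋃ f ∈ t, A f) ≤ 1 := by
        rw [← measure_univ (μ := μ)]
        exact measure_mono (Set.subset_univ _)
      have hgt : (1:ℝ≥0∞) < (N : ℝ≥0∞) * ENNReal.ofReal δ := by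
        rw [← ENNReal.ofReal_natCast, ← ENNReal.ofReal_mul (Nat.cast_nonneg N), ← ENNReal.ofReal_one]
        have hN0 : (0:ℝ) < N := lt_trans (by positivity) hN
        rw [ENNReal.ofReal_lt_ofReal_iff (mul_pos hN0 hδ0)]
        calc (1:ℝ) = δ⁻¹ * δ := by field_simp
          _ < N * δ := mul_lt_mul_of_pos_right hN hδ0
      exact absurd (le_trans hle hone) (not_le.mpr hgt)
    -- small support means small norm
    have hsmall : ∀ f ∈ D, μ (A f) ≤ ENNReal.ofReal δ → ‖T f‖ ≤ ε/2 := by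
      intro f hf hAf
      have h1 : ‖T f‖ = (eLpNorm (⇑f) p μ).toReal := by
        rw [Lp.norm_def, eLpNorm_congr_ae (hT f)]
      rw [h1]
      have h2 : eLpNorm (⇑f) p μ ≤ ENNReal.ofReal (ε/2) := by
        calc eLpNorm (⇑f) p μ ≤ μ (A f) ^ p.toReal⁻¹ * ENNReal.ofReal K := hbound f hf
          _ ≤ (ENNReal.ofReal δ) ^ p.toReal⁻¹ * ENNReal.ofReal K := by
              gcongr
          _ = ENNReal.ofReal (δ ^ p.toReal⁻¹) * ENNReal.ofReal K := by
              rw [ENNReal.ofReal_rpow_of_pos hδ0]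
          _ = ENNReal.ofReal (ε/2/(K+1)) * ENNReal.ofReal K := by
              rw [hδdef, ← Real.rpow_mul (by positivity), mul_inv_cancel₀ hpt0, Real.rpow_one]
          _ = ENNReal.ofReal (ε/2/(K+1) * K) := by
              rw [ENNReal.ofReal_mul (by positivity)]
          _ ≤ ENNReal.ofReal (ε/2) := by
              apply ENNReal.ofReal_le_ofReal
              rw [div_mul_eq_mul_div, div_le_iff₀ (by positivity)]
              have : (K:ℝ) ≤ K + 1 := by linarith
              calc ε/2 * K ≤ ε/2 * (K+1) := by
                    apply mul_le_mul_of_nonneg_left this (by positivity)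
                _ = ε/2 * (K+1) := rfl
      exact ENNReal.toReal_le_of_le_ofReal (by positivity) h2
    -- construct the finite cover
    refine ⟨T '' S ∪ {0}, (hSfin.image T).union (Set.finite_singleton 0), ?_⟩
    rintro - ⟨f, hf, rfl⟩
    by_cases hfS : f ∈ S
    · exact Set.mem_biUnion (Set.mem_union_left _ (Set.mem_image_of_mem T hfS))
        (Metric.mem_ball_self hε)
    · have hAf : μ (A f) ≤ ENNReal.ofReal δ := by
        by_contra hcon
        exact hfS ⟨hf, not_le.mp hcon⟩
      refine Set.mem_biUnion (Set.mem_union_right _ rfl) ?_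
      rw [Metric.mem_ball, dist_zero_right]
      exact lt_of_le_of_lt (hsmall f hf hAf) (by linarith)
  · -- non-compactness
    intro hcpt
    -- the cosine functions
    set c : ℕ → ℝ := fun n => 2*((n:ℝ)+1)*Real.pi with hcdef
    set F : ℕ → ℝ → ℝ := fun n x => Real.cos (c n * x) with hFdef
    have hFc : ∀ n, Continuous (F n) := fun n => by fun_prop
    have hFb : ∀ n x, ‖F n x‖ ≤ 1 := fun n x => by
      rw [Real.norm_eq_abs]; exact Real.abs_cos_le_one _
    have hmem : ∀ n, MemLp (F n) ∞ μ := fun n =>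
      memLp_top_of_bound ((hFc n).aestronglyMeasurable) 1 (ae_of_all _ (hFb n))
    set e : ℕ → Lp ℝ ∞ μ := fun n => ((hmem n).toLp (F n)) with hedef
    have hen : ∀ n, ‖e n‖ ≤ 1 := by
      intro n
      rw [Lp.norm_def, eLpNorm_congr_ae ((hmem n).coeFn_toLp)]
      apply ENNReal.toReal_le_of_le_ofReal zero_le_one
      rw [eLpNorm_exponent_top]
      exact eLpNormEssSup_le_of_ae_bound (ae_of_all _ (hFb n))
    -- separation
    have hsep : ∀ n m : ℕ, n ≠ m → 1/2 ≤ ‖T (e n) - T (e m)‖ := by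
      intro n m hnm
      set h : ℝ → ℝ := fun x => F n x - F m x with hhdef
      have hch : Continuous h := (hFc n).sub (hFc m)
      have hcoe : ⇑(T (e n) - T (e m)) =ᵐ[μ] h := by
        filter_upwards [Lp.coeFn_sub (T (e n)) (T (e m)), hT (e n), hT (e m),
          (hmem n).coeFn_toLp, (hmem m).coeFn_toLp] with x h1 h2 h3 h4 h5
        rw [h1, Pi.sub_apply, h2, h3, hedef]
        simp only []
        rw [h4, h5]
      have hb2 : ∀ x, |h x| ≤ 2 := by
        intro x
        calc |h x| ≤ |F n x| + |F m x| := abs_sub _ _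
          _ ≤ 1 + 1 := add_le_add (hFb n x) (hFb m x)
          _ = 2 := by norm_num
      -- the square integral is 1
      have hcast : ∀ k : ℕ, c k = 2*(((k:ℤ)+1 : ℤ):ℝ)*Real.pi := by
        intro k; rw [hcdef]; push_cast; ring
      have hsq : ∫ x in (0:ℝ)..1, (h x)^2 = 1 := by
        have := aux_int_sq_diff ((n:ℤ)+1) ((m:ℤ)+1) (by omega) (by omega)
          (by omega) (by omega)
        rw [hhdef]
        simp only [hFdef]
        rw [hcast n, hcast m]
        convert this using 3
      -- the L¹ norm lower bound
      have hl1 : 1/2 ≤ ∫ x, |h x| ∂μ := by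
        rw [hμ]; exact aux_l1_lower h hch hb2 hsq
      -- eLpNorm bounds
      have hint : Integrable h μ := by
        rw [hμ]; exact hch.integrableOn_Icc
      have h1norm : ENNReal.ofReal (1/2) ≤ eLpNorm h 1 μ := by
        rw [eLpNorm_one_eq_lintegral_enorm]
        rw [← ofReal_integral_norm_eq_lintegral_enorm hint]
        apply ENNReal.ofReal_le_ofReal
        simpa only [Real.norm_eq_abs] using hl1
      have hppnorm : eLpNorm h 1 μ ≤ eLpNorm h p μ :=
        eLpNorm_le_eLpNorm_of_exponent_le hp1 hch.aestronglyMeasurable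
      have hne : eLpNorm h p μ ≠ ∞ := by
        rw [← eLpNorm_congr_ae hcoe]
        exact Lp.eLpNorm_ne_top _
      have : ENNReal.ofReal (1/2) ≤ eLpNorm h p μ := le_trans h1norm hppnorm
      rw [ENNReal.ofReal_le_iff_le_toReal hne] at this
      rwa [Lp.norm_def, eLpNorm_congr_ae hcoe]
    -- derive a contradiction from compactness
    obtain ⟨Kc, hKc, hKnhds⟩ := hcpt
    obtain ⟨r, hr, hball⟩ := Metric.mem_nhds_iff.mp hKnhds
    set u : ℕ → Lp ℝ p μ := fun n => T ((r/2) • e n) with hudef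
    have hu : ∀ n, u n ∈ Kc := by
      intro n
      apply hball
      rw [Metric.mem_ball, dist_zero_right, norm_smul]
      calc ‖(r/2:ℝ)‖ * ‖e n‖ ≤ (r/2) * 1 := by
            apply mul_le_mul
            · rw [Real.norm_eq_abs, abs_of_pos (by positivity)]
            · exact hen n
            · exact norm_nonneg _
            · positivity
        _ < r := by linarith
    have husep : ∀ a b : ℕ, a ≠ b → r/4 ≤ dist (u a) (u b) := by
      intro a b hab
      rw [dist_eq_norm, hudef]
      simp only []
      rw [_root_.map_smul, _root_.map_smul, ← smul_sub, norm_smul]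
      have h1 : ‖(r/2:ℝ)‖ = r/2 := by rw [Real.norm_eq_abs, abs_of_pos (by positivity)]
      rw [h1]
      calc r/4 = (r/2) * (1/2) := by ring
        _ ≤ (r/2) * ‖T (e a) - T (e b)‖ :=
            mul_le_mul_of_nonneg_left (hsep a b hab) (by positivity)
    obtain ⟨x, -, φ, hφ, hconv⟩ := hKc.tendsto_subseq hu
    obtain ⟨N, hN⟩ := (Metric.tendsto_atTop.mp hconv) (r/8) (by positivity)
    have h1 := hN N (le_refl N)
    have h2 := hN (N+1) (by omega)
    have hne : φ N ≠ φ (N+1) := fun hcon => absurd (hφ.injective hcon) (by omega)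
    have := husep (φ N) (φ (N+1)) hne
    have hd : dist (u (φ N)) (u (φ (N+1))) < r/4 := by
      calc dist (u (φ N)) (u (φ (N+1))) ≤ dist (u (φ N)) x + dist x (u (φ (N+1))) :=
            dist_triangle _ _ _
        _ < r/8 + r/8 := by
            apply add_lt_add h1
            rw [dist_comm]; exact h2
        _ = r/4 := by ring
    linarith
end
end

section
/- The operator T : C[0,1] → c defined by Tx = (x(1/k))_{k=1}^∞ is d-weakly compact but is neither weakly compact nor d-compact. -/
open Filter Topology Bornology

noncomputable section

/-- A subset of a normed space is relatively weakly compact if its closure in the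
weak topology is compact. -/
def RelWeaklyCompact {Y : Type*} [NormedAddCommGroup Y] [NormedSpace ℝ Y] (A : Set Y) : Prop :=
  IsCompact (closure (toWeakSpace ℝ Y '' A))

/-- The point `1/(k+1)` of `[0,1]`. -/
def pt (k : ℕ) : Set.Icc (0 : ℝ) 1 :=
  ⟨1 / (k + 1), ⟨by positivity, by
    rw [div_le_one (by positivity)]
    exact le_add_of_nonneg_left (by positivity)⟩⟩

/-! ### Auxiliary material -/

open OnePoint

/-- The point `0` of `[0,1]`. -/
def pt0 : Set.Icc (0:ℝ) 1 := ⟨0, le_refl 0, zero_le_one⟩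

lemma tendsto_pt : Tendsto pt atTop (𝓝 pt0) := by
  rw [tendsto_subtype_rng]
  simpa [pt, pt0] using tendsto_one_div_add_atTop_nhds_zero_nat (𝕜 := ℝ)

lemma tendsto_some : Tendsto (fun k : ℕ => (k : OnePoint ℕ)) atTop (𝓝 (∞ : OnePoint ℕ)) := by
  have h := OnePoint.tendsto_coe_infty (X := ℕ)
  rwa [Filter.coclosedCompact_eq_cocompact, cocompact_eq_cofinite, Nat.cofinite_eq_atTop] at h

lemma val_infty (y : C(OnePoint ℕ, ℝ)) :
    Tendsto (fun k : ℕ => y k) atTop (𝓝 (y ∞)) :=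
  (y.continuous.tendsto ∞).comp tendsto_some

section WeakAux

variable {E : Type*} [NormedAddCommGroup E] [NormedSpace ℝ E]

lemma pairing_inj : Function.Injective ((topDualPairing ℝ E).flip) := by
  intro x y h
  by_contra hne
  obtain ⟨f, hf⟩ := SeparatingDual.exists_ne_zero (R := ℝ) (sub_ne_zero_of_ne hne)
  have := LinearMap.congr_fun h f
  simp only [LinearMap.flip_apply, topDualPairing_apply] at this
  apply hf
  rw [map_sub, this, sub_self]

lemma weakSpace_t2 : T2Space (WeakSpace ℝ E) :=
  (WeakBilin.isEmbedding (B := (topDualPairing ℝ E).flip) pairing_inj).t2Space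

lemma weak_tendsto_zero {u : ℕ → E}
    (h : ∀ f : E →L[ℝ] ℝ, Tendsto (fun n => f (u n)) atTop (𝓝 0)) :
    Tendsto (fun n => toWeakSpace ℝ E (u n)) atTop (𝓝 0) := by
  refine (WeakBilin.tendsto_iff_forall_eval_tendsto (B := (topDualPairing ℝ E).flip)
    (f := fun n => toWeakSpace ℝ E (u n)) (x := 0) pairing_inj).2 ?_
  intro f
  show Tendsto (fun n => f (u n)) atTop (𝓝 (f 0))
  rw [map_zero]
  exact h f

lemma weak_eval_continuous (f : E →L[ℝ] ℝ) :
    Continuous fun y : WeakSpace ℝ E => f ((toWeakSpace ℝ E).symm y) :=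
  WeakBilin.eval_continuous ((topDualPairing ℝ E).flip) f

end WeakAux

lemma abs_sum_le_of_pairwise_zero {α : Type*} [DecidableEq α] (F : Finset α) (g : α → ℝ) (C : ℝ)
    (hC : 0 ≤ C) (hbd : ∀ x ∈ F, |g x| ≤ C)
    (hdisj : ∀ x ∈ F, ∀ y ∈ F, x ≠ y → g x = 0 ∨ g y = 0) :
    |∑ x ∈ F, g x| ≤ C := by
  induction F using Finset.induction_on with
  | empty => simpa
  | @insert a F ha ih =>
    by_cases hga : g a = 0
    · rw [Finset.sum_insert ha, hga, zero_add]
      exact ih (fun x hx => hbd x (Finset.mem_insert_of_mem hx))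
        (fun x hx y hy => hdisj x (Finset.mem_insert_of_mem hx) y (Finset.mem_insert_of_mem hy))
    · have hz : ∀ x ∈ F, g x = 0 := by
        intro x hx
        rcases hdisj a (Finset.mem_insert_self a F) x (Finset.mem_insert_of_mem hx)
          (by rintro rfl; exact ha hx) with h | h
        · exact absurd h hga
        · exact h
      rw [Finset.sum_insert ha, Finset.sum_eq_zero hz, add_zero]
      exact hbd a (Finset.mem_insert_self a F)

lemma mapClusterPt_const {u : ℕ → ℝ} {x r : ℝ} (h : MapClusterPt x atTop u)
    (he : ∀ᶠ n in atTop, u n = r) : x = r := by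
  have hm : Filter.map u atTop = pure r := by
    rw [Filter.map_congr he]
    simp [Filter.map_const]
  have hcl : ClusterPt x (𝓟 {r}) := by
    have := h.clusterPt
    rwa [hm, ← Filter.principal_singleton] at this
  have := mem_closure_iff_clusterPt.2 hcl
  simpa using this

lemma key' {a b : ℝ} (ha : 1 ≤ a) (hab : a + 1 ≤ b) :
    (a^2 + b^2) * (a*b) ≤ 4*(b-a)*a^2*b^2 := by
  have h3 : 0 ≤ b - a - 1 := by linarith
  have ha0 : 0 < a := by linarith
  have hb0 : 0 < b := by linarith
  nlinarith [mul_nonneg (mul_nonneg h3 ha0.le) (mul_nonneg ha0.le hb0.le),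
    mul_nonneg (mul_nonneg (sub_nonneg.2 ha) ha0.le) (mul_nonneg hb0.le hb0.le),
    mul_nonneg (mul_nonneg h3 hb0.le) (mul_nonneg hb0.le ha0.le),
    mul_pos ha0 hb0, sq_nonneg (a-b), sq_nonneg (a*b)]

lemma key_gap' {a b : ℝ} (ha : 1 ≤ a) (hab : a + 1 ≤ b) :
    1/(4*a^2) + 1/(4*b^2) ≤ 1/a - 1/b := by
  have ha0 : 0 < a := by linarith
  have hb0 : 0 < b := by linarith
  have e1 : 1/(4*a^2) + 1/(4*b^2) = (a^2+b^2)/(4*(a^2*b^2)) := by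
    field_simp; ring
  have e2 : 1/a - 1/b = (b-a)/(a*b) := by
    field_simp
  rw [e1, e2, div_le_div_iff₀ (by positivity) (by positivity)]
  nlinarith [key' ha hab]

lemma key_gap {n m : ℕ} (h : n < m) :
    1/(4*((n:ℝ)+1)^2) + 1/(4*((m:ℝ)+1)^2) ≤ 1/((n:ℝ)+1) - 1/((m:ℝ)+1) := by
  have h1 : (n:ℝ) + 1 + 1 ≤ (m:ℝ) + 1 := by
    have : (n:ℝ) + 1 ≤ (m:ℝ) := by exact_mod_cast h
    linarith
  exact key_gap' (by linarith [n.cast_nonneg (α := ℝ)]) h1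

/-- Bump function at `1/(n+1)` with tiny support. -/
def bump (n : ℕ) : C(Set.Icc (0:ℝ) 1, ℝ) :=
  ⟨fun t => max 0 (1 - 4*((n:ℝ)+1)^2 * |(t:ℝ) - 1/((n:ℝ)+1)|),
   by fun_prop⟩

lemma bump_apply (n : ℕ) (t : Set.Icc (0:ℝ) 1) :
    bump n t = max 0 (1 - 4*((n:ℝ)+1)^2 * |(t:ℝ) - 1/((n:ℝ)+1)|) := rfl

lemma bump_nonneg (n : ℕ) (t : Set.Icc (0:ℝ) 1) : 0 ≤ bump n t := le_max_left _ _

lemma bump_le_one (n : ℕ) (t : Set.Icc (0:ℝ) 1) : bump n t ≤ 1 := by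
  rw [bump_apply]
  have : (0:ℝ) ≤ 4*((n:ℝ)+1)^2 * |(t:ℝ) - 1/((n:ℝ)+1)| := by positivity
  apply max_le zero_le_one (by linarith)

lemma bump_self (n : ℕ) : bump n (pt n) = 1 := by
  rw [bump_apply]
  simp [pt]

lemma bump_small (n : ℕ) (t : Set.Icc (0:ℝ) 1) (h : bump n t ≠ 0) :
    |(t:ℝ) - 1/((n:ℝ)+1)| < 1/(4*((n:ℝ)+1)^2) := by
  by_contra hc
  push_neg at hc
  apply h
  rw [bump_apply, max_eq_left]
  have h4 : (0:ℝ) < 4*((n:ℝ)+1)^2 := by positivity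
  have := (div_le_iff₀' h4).mp hc
  linarith

lemma radius_le (n k : ℕ) (h : n ≠ k) :
    1/(4*((n:ℝ)+1)^2) ≤ |1/((k:ℝ)+1) - 1/((n:ℝ)+1)| := by
  rcases h.lt_or_gt with hlt | hlt
  · have := key_gap hlt
    have h2 : (0:ℝ) < 1/(4*((k:ℝ)+1)^2) := by positivity
    calc 1/(4*((n:ℝ)+1)^2) ≤ 1/((n:ℝ)+1) - 1/((k:ℝ)+1) := by linarith
    _ ≤ |1/((k:ℝ)+1) - 1/((n:ℝ)+1)| := by rw [abs_sub_comm]; exact le_abs_self _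
  · have := key_gap hlt
    have h2 : (0:ℝ) < 1/(4*((k:ℝ)+1)^2) := by positivity
    calc 1/(4*((n:ℝ)+1)^2) ≤ 1/((k:ℝ)+1) - 1/((n:ℝ)+1) := by linarith
    _ ≤ |1/((k:ℝ)+1) - 1/((n:ℝ)+1)| := le_abs_self _

lemma bump_pt_ne (n k : ℕ) (h : n ≠ k) : bump n (pt k) = 0 := by
  by_contra hc
  exact absurd (radius_le n k h) (not_le.2 (by simpa [pt] using bump_small n (pt k) hc))

lemma bump_disjoint_pointwise {n m : ℕ} (h : n ≠ m) (t : Set.Icc (0:ℝ) 1) :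
    bump n t = 0 ∨ bump m t = 0 := by
  by_contra hc
  push_neg at hc
  have h1 := bump_small n t hc.1
  have h2 := bump_small m t hc.2
  have htri : |1/((n:ℝ)+1) - 1/((m:ℝ)+1)| ≤
      |(t:ℝ) - 1/((n:ℝ)+1)| + |(t:ℝ) - 1/((m:ℝ)+1)| := by
    calc |1/((n:ℝ)+1) - 1/((m:ℝ)+1)| = |((t:ℝ) - 1/((m:ℝ)+1)) - ((t:ℝ) - 1/((n:ℝ)+1))| := by
          ring_nf
    _ ≤ |(t:ℝ) - 1/((m:ℝ)+1)| + |(t:ℝ) - 1/((n:ℝ)+1)| := abs_sub _ _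
    _ = |(t:ℝ) - 1/((n:ℝ)+1)| + |(t:ℝ) - 1/((m:ℝ)+1)| := by ring
  rcases h.lt_or_gt with hlt | hlt
  · have hk := key_gap hlt
    have habs : |1/((n:ℝ)+1) - 1/((m:ℝ)+1)| = 1/((n:ℝ)+1) - 1/((m:ℝ)+1) := by
      rw [abs_of_nonneg]
      linarith [key_gap hlt, (by positivity : (0:ℝ) < 1/(4*((n:ℝ)+1)^2)),
        (by positivity : (0:ℝ) < 1/(4*((m:ℝ)+1)^2))]
    linarith [htri, h1, h2, hk, habs]
  · have hk := key_gap hlt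
    have habs : |1/((n:ℝ)+1) - 1/((m:ℝ)+1)| = 1/((m:ℝ)+1) - 1/((n:ℝ)+1) := by
      rw [abs_sub_comm, abs_of_nonneg]
      linarith [key_gap hlt, (by positivity : (0:ℝ) < 1/(4*((n:ℝ)+1)^2)),
        (by positivity : (0:ℝ) < 1/(4*((m:ℝ)+1)^2))]
    linarith [htri, h1, h2, hk, habs]

/-- The approximating functions for part 2. -/
def xseq (n : ℕ) : C(Set.Icc (0:ℝ) 1, ℝ) :=
  ⟨fun t => min 1 (((n:ℝ)+1) * (t:ℝ)), by fun_prop⟩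

lemma xseq_apply (n : ℕ) (t : Set.Icc (0:ℝ) 1) :
    xseq n t = min 1 (((n:ℝ)+1) * (t:ℝ)) := rfl

/-- The operator `T : C[0,1] → c`, `Tx = (x(1/k))ₖ` (with `c` realized as the continuous
functions on the one-point compactification of `ℕ`), is d-weakly compact, but it is
neither weakly compact nor d-compact. -/
theorem operator_dWeaklyCompact_not_weaklyCompact_not_dCompact
    (T : C(Set.Icc (0 : ℝ) 1, ℝ) →L[ℝ] C(OnePoint ℕ, ℝ))
    (hT : ∀ (x : C(Set.Icc (0 : ℝ) 1, ℝ)) (k : ℕ), T x (OnePoint.some k) = x (pt k)) :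
    (∀ D : Set C(Set.Icc (0 : ℝ) 1, ℝ), DisjointSet D → IsBounded D →
        RelWeaklyCompact (T '' D)) ∧
      ¬ RelWeaklyCompact (T '' Metric.closedBall 0 1) ∧
      ¬ (∀ D : Set C(Set.Icc (0 : ℝ) 1, ℝ), DisjointSet D → IsBounded D →
        IsCompact (closure (T '' D))) := by
  haveI ht2 : T2Space (WeakSpace ℝ C(OnePoint ℕ, ℝ)) := weakSpace_t2
  -- the value at infinity
  have hTinf : ∀ x : C(Set.Icc (0 : ℝ) 1, ℝ), T x ∞ = x pt0 := by
    intro x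
    refine tendsto_nhds_unique (val_infty (T x)) ?_
    have h1 : (fun k : ℕ => T x k) = fun k : ℕ => x (pt k) := funext fun k => hT x k
    rw [h1]
    exact (x.continuous.tendsto pt0).comp tendsto_pt
  refine ⟨?_, ?_, ?_⟩
  · -- Part 1: d-weakly compact
    intro D hD hBdd
    set c := C(OnePoint ℕ, ℝ)
    obtain ⟨M, hM⟩ := isBounded_iff_forall_norm_le.1 hBdd
    set C : ℝ := ‖T‖ * max M 0 with hCdef
    have hC0 : 0 ≤ C := mul_nonneg (norm_nonneg T) (le_max_right M 0)
    have hTx_le : ∀ x ∈ D, ‖T x‖ ≤ C := fun x hx => (T.le_opNorm x).trans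
      (mul_le_mul_of_nonneg_left ((hM x hx).trans (le_max_left _ _)) (norm_nonneg T))
    -- pointwise disjointness on [0,1]
    have hptD : ∀ x ∈ D, ∀ y ∈ D, x ≠ y → ∀ t, x t = 0 ∨ y t = 0 := by
      intro x hx y hy hxy t
      have h := hD x hx y hy hxy
      have ht : |x t| ⊓ |y t| = 0 := by
        have := DFunLike.congr_fun h t
        simpa using this
      by_contra hc
      push_neg at hc
      have : 0 < |x t| ⊓ |y t| := lt_min (abs_pos.2 hc.1) (abs_pos.2 hc.2)
      rw [ht] at this
      exact lt_irrefl 0 this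
    -- pointwise disjointness of images
    have himg : ∀ x ∈ D, ∀ y ∈ D, x ≠ y → ∀ p : OnePoint ℕ, T x p = 0 ∨ T y p = 0 := by
      intro x hx y hy hxy p
      cases p using OnePoint.rec with
      | infty =>
        show T x ∞ = 0 ∨ T y ∞ = 0
        rw [hTinf, hTinf]
        exact hptD x hx y hy hxy pt0
      | coe k =>
        rw [show ((k : ℕ) : OnePoint ℕ) = OnePoint.some k from rfl, hT, hT]
        exact hptD x hx y hy hxy (pt k)
    -- D is countable
    have hcount : D.Countable := by
      have h0 : (D \ {0}).Countable := by
        apply Set.PairwiseDisjoint.countable_of_isOpen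
          (s := fun x : C(Set.Icc (0:ℝ) 1, ℝ) => {t | x t ≠ 0})
        · intro x hx y hy hxy
          refine Set.disjoint_left.2 fun t htx hty => ?_
          rcases hptD x hx.1 y hy.1 hxy t with h | h
          · exact htx h
          · exact hty h
        · intro x _
          exact isOpen_ne.preimage x.continuous
        · intro x hx
          rw [Set.nonempty_def]
          by_contra hne
          push_neg at hne
          apply hx.2
          refine ContinuousMap.ext fun t => ?_
          simpa using hne t
      have hsub : D ⊆ (D \ {0}) ∪ {0} := by
        intro x hx
        by_cases hx0 : x = 0
        · exact Or.inr hx0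
        · exact Or.inl ⟨hx, hx0⟩
      exact ((h0.union (Set.countable_singleton 0)).mono hsub)
    show IsCompact (closure (toWeakSpace ℝ c '' (T '' D)))
    by_cases hfin : D.Finite
    · have hAfin : (toWeakSpace ℝ c '' (T '' D)).Finite := (hfin.image _).image _
      rw [hAfin.isClosed.closure_eq]
      exact hAfin.isCompact
    · haveI := hcount.to_subtype
      haveI : Infinite ↥D := Set.infinite_coe_iff.2 hfin
      obtain ⟨e⟩ : Nonempty (ℕ ≃ ↥D) := nonempty_equiv_of_countable
      set u : ℕ → C(Set.Icc (0:ℝ) 1, ℝ) := fun n => ((e n : ↥D) : C(Set.Icc (0:ℝ) 1, ℝ)) with hu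
      have hu_mem : ∀ n, u n ∈ D := fun n => (e n).2
      have hu_inj : Function.Injective u := fun n m h =>
        e.injective (Subtype.coe_injective h)
      -- the key summability bound
      have hsum : ∀ f : c →L[ℝ] ℝ, ∀ N : ℕ,
          ∑ n ∈ Finset.range N, |f (T (u n))| ≤ ‖f‖ * C := by
        intro f N
        set s : ℕ → ℝ := fun n => if f (T (u n)) < 0 then -1 else 1 with hs
        have habs : ∀ n, |f (T (u n))| = f (s n • T (u n)) := by
          intro n
          rw [_root_.map_smul, smul_eq_mul]
          by_cases h : f (T (u n)) < 0
          · simp only [hs, if_pos h]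
            rw [abs_of_neg h]; ring
          · simp only [hs, if_neg h]
            rw [abs_of_nonneg (not_lt.1 h)]; ring
        have hnorm : ‖∑ n ∈ Finset.range N, s n • T (u n)‖ ≤ C := by
          refine (ContinuousMap.norm_le _ hC0).2 fun p => ?_
          have heval : (∑ n ∈ Finset.range N, s n • T (u n)) p
              = ∑ n ∈ Finset.range N, s n * (T (u n) p) := by
            have := map_sum (ContinuousMap.evalCLM ℝ p)
              (fun n => s n • T (u n)) (Finset.range N)
            simpa using this
          rw [Real.norm_eq_abs, heval]
          refine abs_sum_le_of_pairwise_zero _ _ C hC0 ?_ ?_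
          · intro n _
            rw [abs_mul]
            have hs1 : |s n| ≤ 1 := by
              by_cases h : f (T (u n)) < 0 <;> simp [hs, h]
            calc |s n| * |T (u n) p| ≤ 1 * |T (u n) p| :=
                  mul_le_mul_of_nonneg_right hs1 (abs_nonneg _)
            _ = |T (u n) p| := one_mul _
            _ ≤ ‖T (u n)‖ := by
                  rw [← Real.norm_eq_abs]
                  exact ContinuousMap.norm_coe_le_norm _ _
            _ ≤ C := hTx_le _ (hu_mem n)
          · intro n hn m hm hnm
            rcases himg (u n) (hu_mem n) (u m) (hu_mem m)
              (fun h => hnm (hu_inj h)) p with h | h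
            · exact Or.inl (by rw [h, mul_zero])
            · exact Or.inr (by rw [h, mul_zero])
        calc ∑ n ∈ Finset.range N, |f (T (u n))|
            = f (∑ n ∈ Finset.range N, s n • T (u n)) := by
              rw [map_sum]
              exact Finset.sum_congr rfl fun n _ => habs n
        _ ≤ |f (∑ n ∈ Finset.range N, s n • T (u n))| := le_abs_self _
        _ ≤ ‖f‖ * ‖∑ n ∈ Finset.range N, s n • T (u n)‖ := by
              rw [← Real.norm_eq_abs]
              exact f.le_opNorm _
        _ ≤ ‖f‖ * C := mul_le_mul_of_nonneg_left hnorm (norm_nonneg f)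
      -- weak convergence to 0
      have htend : ∀ f : c →L[ℝ] ℝ, Tendsto (fun n => f (T (u n))) atTop (𝓝 0) := by
        intro f
        have hsummable : Summable fun n => |f (T (u n))| :=
          summable_of_sum_range_le (fun n => abs_nonneg _) (hsum f)
        exact squeeze_zero_norm (fun n => le_of_eq (Real.norm_eq_abs _))
          hsummable.tendsto_atTop_zero
      have hw : Tendsto (fun n => toWeakSpace ℝ c (T (u n))) atTop (𝓝 0) :=
        weak_tendsto_zero htend
      -- compact superset
      set g : OnePoint ℕ → WeakSpace ℝ c :=
        fun p => p.elim 0 fun n => toWeakSpace ℝ c (T (u n)) with hg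
      have hgcont : Continuous g := by
        rw [OnePoint.continuous_iff_from_discrete, Nat.cofinite_eq_atTop]
        exact hw
      have hgrange : IsCompact (Set.range g) := isCompact_range hgcont
      have hsub : toWeakSpace ℝ c '' (T '' D) ⊆ Set.range g := by
        rintro - ⟨-, ⟨x, hx, rfl⟩, rfl⟩
        refine ⟨OnePoint.some (e.symm ⟨x, hx⟩), ?_⟩
        show toWeakSpace ℝ c (T (u (e.symm ⟨x, hx⟩))) = toWeakSpace ℝ c (T x)
        rw [hu]
        simp
      exact hgrange.of_isClosed_subset isClosed_closure
        (closure_minimal hsub hgrange.isClosed)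
  · -- Part 2: not weakly compact
    intro hcomp
    set c := C(OnePoint ℕ, ℝ)
    set u : ℕ → WeakSpace ℝ c := fun n => toWeakSpace ℝ c (T (xseq n)) with hu
    have hmem : ∀ n, u n ∈ closure (toWeakSpace ℝ c '' (T '' Metric.closedBall 0 1)) := by
      intro n
      apply subset_closure
      refine ⟨T (xseq n), ⟨xseq n, ?_, rfl⟩, rfl⟩
      rw [Metric.mem_closedBall, dist_zero_right]
      refine (ContinuousMap.norm_le _ zero_le_one).2 fun t => ?_
      rw [xseq_apply, Real.norm_eq_abs, abs_le]
      constructor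
      · have := mul_nonneg (by positivity : (0:ℝ) ≤ (n:ℝ)+1) t.2.1
        have := le_min zero_le_one this
        linarith
      · exact min_le_left _ _
    have hle : Filter.map u atTop ≤ 𝓟 (closure (toWeakSpace ℝ c '' (T '' Metric.closedBall 0 1))) := by
      rw [Filter.le_principal_iff, Filter.mem_map]
      exact Filter.Eventually.of_forall hmem
    obtain ⟨y, -, hy⟩ := hcomp.exists_clusterPt hle
    have hy' : MapClusterPt y atTop u := hy
    set y' : c := (toWeakSpace ℝ c).symm y with hy'def
    -- coordinates of y' are 1
    have hcoord : ∀ k : ℕ, y' (OnePoint.some k) = 1 := by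
      intro k
      have hcont : ContinuousAt (fun w : WeakSpace ℝ c =>
          (ContinuousMap.evalCLM ℝ (OnePoint.some k)) ((toWeakSpace ℝ c).symm w)) y :=
        (weak_eval_continuous (ContinuousMap.evalCLM ℝ (OnePoint.some k))).continuousAt
      have hmc := hy'.continuousAt_comp hcont
      have hev : ∀ᶠ n in atTop, ((fun w : WeakSpace ℝ c =>
          (ContinuousMap.evalCLM ℝ (OnePoint.some k)) ((toWeakSpace ℝ c).symm w)) ∘ u) n = 1 := by
        filter_upwards [eventually_ge_atTop k] with n hn
        have h1 : (toWeakSpace ℝ c).symm (u n) = T (xseq n) :=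
          (toWeakSpace ℝ c).symm_apply_apply _
        show (ContinuousMap.evalCLM ℝ (OnePoint.some k)) ((toWeakSpace ℝ c).symm (u n)) = 1
        rw [h1]
        show (T (xseq n)) (OnePoint.some k) = 1
        rw [hT, xseq_apply]
        have hk : ((pt k : Set.Icc (0:ℝ) 1) : ℝ) = 1/((k:ℝ)+1) := rfl
        rw [hk, min_eq_left]
        rw [mul_one_div, le_div_iff₀ (by positivity), one_mul]
        exact_mod_cast Nat.succ_le_succ hn
      exact mapClusterPt_const hmc hev
    -- value of y' at infinity is 0
    have hinfty : y' ∞ = 0 := by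
      have hcont : ContinuousAt (fun w : WeakSpace ℝ c =>
          (ContinuousMap.evalCLM ℝ (∞ : OnePoint ℕ)) ((toWeakSpace ℝ c).symm w)) y :=
        (weak_eval_continuous (ContinuousMap.evalCLM ℝ (∞ : OnePoint ℕ))).continuousAt
      have hmc := hy'.continuousAt_comp hcont
      have hev : ∀ᶠ n in atTop, ((fun w : WeakSpace ℝ c =>
          (ContinuousMap.evalCLM ℝ (∞ : OnePoint ℕ)) ((toWeakSpace ℝ c).symm w)) ∘ u) n = 0 := by
        filter_upwards with n
        have h1 : (toWeakSpace ℝ c).symm (u n) = T (xseq n) :=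
          (toWeakSpace ℝ c).symm_apply_apply _
        show (ContinuousMap.evalCLM ℝ (∞ : OnePoint ℕ)) ((toWeakSpace ℝ c).symm (u n)) = 0
        rw [h1]
        show (T (xseq n)) ∞ = 0
        rw [hTinf, xseq_apply]
        have h0 : ((pt0 : Set.Icc (0:ℝ) 1) : ℝ) = 0 := rfl
        rw [h0, mul_zero]
        exact min_eq_right zero_le_one
      exact mapClusterPt_const hmc hev
    have h1 : y' ∞ = 1 := by
      refine tendsto_nhds_unique (val_infty y') ?_
      have : (fun k : ℕ => y' k) = fun _ : ℕ => (1:ℝ) := funext fun k => hcoord k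
      rw [this]
      exact tendsto_const_nhds
    rw [hinfty] at h1
    exact zero_ne_one h1
  · -- Part 3: not d-compact
    intro hall
    have hdisj : DisjointSet (Set.range bump) := by
      rintro x ⟨n, rfl⟩ y ⟨m, rfl⟩ hne
      have hnm : n ≠ m := by rintro rfl; exact hne rfl
      ext t
      have : |bump n t| ⊓ |bump m t| = 0 := by
        rcases bump_disjoint_pointwise hnm t with h | h
        · rw [h, abs_zero]
          exact inf_eq_left.2 (abs_nonneg _)
        · rw [h, abs_zero]
          exact inf_eq_right.2 (abs_nonneg _)
      simpa using this
    have hbd : IsBounded (Set.range bump) := by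
      apply (Metric.isBounded_closedBall (x := (0 : C(Set.Icc (0:ℝ) 1, ℝ))) (r := 1)).subset
      rintro x ⟨n, rfl⟩
      rw [Metric.mem_closedBall, dist_zero_right]
      refine (ContinuousMap.norm_le _ zero_le_one).2 fun t => ?_
      rw [Real.norm_eq_abs, abs_le]
      exact ⟨by linarith [bump_nonneg n t], bump_le_one n t⟩
    have hK := hall _ hdisj hbd
    have hsep : ∀ n m : ℕ, n ≠ m → (1:ℝ) ≤ dist (T (bump n)) (T (bump m)) := by
      intro n m hnm
      rw [dist_eq_norm]
      calc (1:ℝ) = ‖(T (bump n) - T (bump m)) (OnePoint.some n)‖ := by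
            rw [ContinuousMap.sub_apply, hT, hT, bump_self, bump_pt_ne m n (Ne.symm hnm)]
            norm_num
      _ ≤ ‖T (bump n) - T (bump m)‖ := ContinuousMap.norm_coe_le_norm _ _
    have htb := hK.totallyBounded
    rw [Metric.totallyBounded_iff] at htb
    obtain ⟨t, htfin, hcov⟩ := htb (1/2) (by norm_num)
    have hchoice : ∀ n : ℕ, ∃ y ∈ t, T (bump n) ∈ Metric.ball y (1/2) := by
      intro n
      have : T (bump n) ∈ closure (T '' Set.range bump) :=
        subset_closure ⟨bump n, ⟨n, rfl⟩, rfl⟩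
      have := hcov this
      simpa using this
    choose ctr hctr hball using hchoice
    have hinj : Function.Injective ctr := by
      intro n m hnm
      by_contra hne
      have h1 := hball n
      have h2 := hball m
      rw [hnm] at h1
      have : dist (T (bump n)) (T (bump m)) < 1 := by
        calc dist (T (bump n)) (T (bump m)) ≤
            dist (T (bump n)) (ctr m) + dist (T (bump m)) (ctr m) := dist_triangle_right _ _ _
        _ < 1/2 + 1/2 := add_lt_add (Metric.mem_ball.1 h1) (Metric.mem_ball.1 h2)
        _ = 1 := by norm_num
      exact absurd this (not_lt.2 (hsep n m hne))
    exact (Set.infinite_range_of_injective hinj) (htfin.subset (Set.range_subset_iff.2 hctr))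
end
end
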